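/- (Integrability criterion) Let f be bounded on I = [a,b] ∩ 𝕋 and g increasing on I. Then f is Riemann–Stieltjes delta integrable with respect to g on I if and only if for every ε > 0 there exists a partition P of I such that U_Δ(P,f,g) − L_Δ(P,f,g) < ε. -/

import Mathlib

open Set Filter

noncomputable section

/-- Backward jump operator of a time scale `T`. -/
def tsRho (T : Set ℝ) (t : ℝ) : ℝ := sSup {s ∈ T | s < t}

/-- Forward jump operator of a time scale `T`. -/
def tsSigma (T : Set ℝ) (t : ℝ) : ℝ := sInf {s ∈ T | t < s}

/-- A partition `a = t₀ < t₁ < ⋯ < tₙ = b` of `[a,b] ∩ T` by points of `T`. -/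
structure TSPartition (T : Set ℝ) (a b : ℝ) where
  n : ℕ
  t : ℕ → ℝ
  npos : 0 < n
  mem : ∀ j ≤ n, t j ∈ T
  first : t 0 = a
  last : t n = b
  mono : ∀ j < n, t j < t (j + 1)

/-- Upper Darboux–Stieltjes delta sum `U_Δ(P, f, g)`. -/
def upperSumD (T : Set ℝ) (f g : ℝ → ℝ) {a b : ℝ} (P : TSPartition T a b) : ℝ :=
  ∑ j ∈ Finset.range P.n,
    sSup (f '' (Set.Icc (P.t j) (tsRho T (P.t (j + 1))) ∩ T)) * (g (P.t (j + 1)) - g (P.t j))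

/-- Lower Darboux–Stieltjes delta sum `L_Δ(P, f, g)`. -/
def lowerSumD (T : Set ℝ) (f g : ℝ → ℝ) {a b : ℝ} (P : TSPartition T a b) : ℝ :=
  ∑ j ∈ Finset.range P.n,
    sInf (f '' (Set.Icc (P.t j) (tsRho T (P.t (j + 1))) ∩ T)) * (g (P.t (j + 1)) - g (P.t j))

/-- Upper Darboux–Stieltjes nabla sum `U_∇(P, f, g)`. -/
def upperSumN (T : Set ℝ) (f g : ℝ → ℝ) {a b : ℝ} (P : TSPartition T a b) : ℝ :=
  ∑ j ∈ Finset.range P.n,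
    sSup (f '' (Set.Icc (tsSigma T (P.t j)) (P.t (j + 1)) ∩ T)) * (g (P.t (j + 1)) - g (P.t j))

/-- Lower Darboux–Stieltjes nabla sum `L_∇(P, f, g)`. -/
def lowerSumN (T : Set ℝ) (f g : ℝ → ℝ) {a b : ℝ} (P : TSPartition T a b) : ℝ :=
  ∑ j ∈ Finset.range P.n,
    sInf (f '' (Set.Icc (tsSigma T (P.t j)) (P.t (j + 1)) ∩ T)) * (g (P.t (j + 1)) - g (P.t j))

/-- Upper Darboux–Stieltjes delta integral. -/
def upperIntD (T : Set ℝ) (a b : ℝ) (f g : ℝ → ℝ) : ℝ :=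
  sInf (Set.range fun P : TSPartition T a b => upperSumD T f g P)

/-- Lower Darboux–Stieltjes delta integral. -/
def lowerIntD (T : Set ℝ) (a b : ℝ) (f g : ℝ → ℝ) : ℝ :=
  sSup (Set.range fun P : TSPartition T a b => lowerSumD T f g P)

/-- Upper Darboux–Stieltjes nabla integral. -/
def upperIntN (T : Set ℝ) (a b : ℝ) (f g : ℝ → ℝ) : ℝ :=
  sInf (Set.range fun P : TSPartition T a b => upperSumN T f g P)

/-- Lower Darboux–Stieltjes nabla integral. -/
def lowerIntN (T : Set ℝ) (a b : ℝ) (f g : ℝ → ℝ) : ℝ :=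
  sSup (Set.range fun P : TSPartition T a b => lowerSumN T f g P)

/-- `f` is Riemann–Stieltjes delta integrable with respect to `g` on `[a,b] ∩ T`. -/
def RSDeltaIntegrable (T : Set ℝ) (a b : ℝ) (f g : ℝ → ℝ) : Prop :=
  lowerIntD T a b f g = upperIntD T a b f g

/-- The Riemann–Stieltjes delta integral `∫ₐᵇ f Δg`. -/
def RSDeltaIntegral (T : Set ℝ) (a b : ℝ) (f g : ℝ → ℝ) : ℝ := upperIntD T a b f g

/-- `f` is Riemann–Stieltjes nabla integrable with respect to `g` on `[a,b] ∩ T`. -/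
def RSNablaIntegrable (T : Set ℝ) (a b : ℝ) (f g : ℝ → ℝ) : Prop :=
  lowerIntN T a b f g = upperIntN T a b f g

/-- The Riemann–Stieltjes nabla integral `∫ₐᵇ f ∇g`. -/
def RSNablaIntegral (T : Set ℝ) (a b : ℝ) (f g : ℝ → ℝ) : ℝ := upperIntN T a b f g

/-!
Inserting a point `s ∈ T` between `tₖ` and `tₖ₊₁` replaces the block `[tₖ, ρ(tₖ₊₁)] ∩ T`
by `[tₖ, ρ(s)] ∩ T` and `[s, ρ(tₖ₊₁)] ∩ T`, both contained in it (as `ρ(s) ≤ s ≤ ρ(tₖ₊₁)`),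
and splits `Δgₖ` into two nonnegative parts. Hence refining lowers upper sums and raises lower sums.
Any two partitions have a common refinement, so the upper and lower sums form a directed pair,
and for such a pair `sup L = inf U` is equivalent to `U(P) - L(P)` being arbitrarily small.
-/

theorem csSup_range_eq_csInf_range_iff {ι : Type*} [Nonempty ι] {lo up : ι → ℝ}
    (hle : ∀ k, lo k ≤ up k) (hdir : ∀ i j, ∃ k, lo i ≤ lo k ∧ up k ≤ up j) :
    sSup (range lo) = sInf (range up) ↔ ∀ ε > 0, ∃ k, up k - lo k < ε := by
  have hcross : ∀ i j, lo i ≤ up j := fun i j =>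
    let ⟨k, hik, hkj⟩ := hdir i j
    hik.trans ((hle k).trans hkj)
  have hbddL : BddAbove (range lo) := by
    refine ⟨up (Classical.arbitrary ι), ?_⟩
    rintro _ ⟨i, rfl⟩
    exact hcross _ _
  have hbddU : BddBelow (range up) := by
    refine ⟨lo (Classical.arbitrary ι), ?_⟩
    rintro _ ⟨j, rfl⟩
    exact hcross _ _
  constructor
  · intro h ε hε
    obtain ⟨_, ⟨j, rfl⟩, hj⟩ :=
      exists_lt_of_csInf_lt (range_nonempty up) (lt_add_of_pos_right _ (half_pos hε))
    obtain ⟨_, ⟨i, rfl⟩, hi⟩ :=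
      exists_lt_of_lt_csSup (range_nonempty lo) (sub_lt_self _ (half_pos hε))
    obtain ⟨k, hik, hkj⟩ := hdir i j
    exact ⟨k, by linarith⟩
  · intro h
    refine le_antisymm (csSup_le (range_nonempty lo) ?_) (le_of_forall_pos_le_add fun ε hε => ?_)
    · rintro _ ⟨i, rfl⟩
      exact le_csInf (range_nonempty up) (by rintro _ ⟨j, rfl⟩; exact hcross i j)
    · obtain ⟨k, hk⟩ := h ε hε
      have hU := csInf_le hbddU (mem_range_self k)
      have hL := le_csSup hbddL (mem_range_self k)
      linarith

section DeltaBlock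

variable {T : Set ℝ} {u s v : ℝ}

theorem le_tsRho (hu : u ∈ T) (huv : u < v) : u ≤ tsRho T v :=
  le_csSup ⟨v, fun _ hx => hx.2.le⟩ ⟨hu, huv⟩

theorem tsRho_le (hu : u ∈ T) (huv : u < v) : tsRho T v ≤ v :=
  csSup_le ⟨u, hu, huv⟩ fun _ hx => hx.2.le

/-- The block `I_Δ = [u, ρ(v)] ∩ T` of a delta sum. -/
def deltaBlock (T : Set ℝ) (u v : ℝ) : Set ℝ := Icc u (tsRho T v) ∩ T

theorem left_mem_deltaBlock (hu : u ∈ T) (huv : u < v) : u ∈ deltaBlock T u v :=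
  ⟨⟨le_rfl, le_tsRho hu huv⟩, hu⟩

theorem deltaBlock_subset_of_le_left (hus : u ≤ s) : deltaBlock T s v ⊆ deltaBlock T u v :=
  inter_subset_inter_left T (Icc_subset_Icc_left hus)

theorem deltaBlock_subset_of_lt_right (hu : u ∈ T) (hs : s ∈ T) (hus : u < s) (hsv : s < v) :
    deltaBlock T u s ⊆ deltaBlock T u v :=
  inter_subset_inter_left T (Icc_subset_Icc_right ((tsRho_le hu hus).trans (le_tsRho hs hsv)))

variable {f g : ℝ → ℝ}

theorem sSup_deltaBlock_split_le (hu : u ∈ T) (hs : s ∈ T) (hus : u < s) (hsv : s < v)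
    (hf : BddAbove (f '' deltaBlock T u v)) (hgus : g u ≤ g s) (hgsv : g s ≤ g v) :
    sSup (f '' deltaBlock T u s) * (g s - g u) + sSup (f '' deltaBlock T s v) * (g v - g s) ≤
      sSup (f '' deltaBlock T u v) * (g v - g u) := by
  have hleft : sSup (f '' deltaBlock T u s) ≤ sSup (f '' deltaBlock T u v) :=
    csSup_le_csSup hf ⟨f u, mem_image_of_mem f (left_mem_deltaBlock hu hus)⟩
      (image_mono (deltaBlock_subset_of_lt_right hu hs hus hsv))
  have hright : sSup (f '' deltaBlock T s v) ≤ sSup (f '' deltaBlock T u v) :=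
    csSup_le_csSup hf ⟨f s, mem_image_of_mem f (left_mem_deltaBlock hs hsv)⟩
      (image_mono (deltaBlock_subset_of_le_left hus.le))
  calc _ ≤ sSup (f '' deltaBlock T u v) * (g s - g u) +
          sSup (f '' deltaBlock T u v) * (g v - g s) :=
        add_le_add (mul_le_mul_of_nonneg_right hleft (sub_nonneg.2 hgus))
          (mul_le_mul_of_nonneg_right hright (sub_nonneg.2 hgsv))
    _ = _ := by ring

theorem sInf_deltaBlock_le_split (hu : u ∈ T) (hs : s ∈ T) (hus : u < s) (hsv : s < v)
    (hf : BddBelow (f '' deltaBlock T u v)) (hgus : g u ≤ g s) (hgsv : g s ≤ g v) :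
    sInf (f '' deltaBlock T u v) * (g v - g u) ≤
      sInf (f '' deltaBlock T u s) * (g s - g u) + sInf (f '' deltaBlock T s v) * (g v - g s) := by
  have hleft : sInf (f '' deltaBlock T u v) ≤ sInf (f '' deltaBlock T u s) :=
    csInf_le_csInf hf ⟨f u, mem_image_of_mem f (left_mem_deltaBlock hu hus)⟩
      (image_mono (deltaBlock_subset_of_lt_right hu hs hus hsv))
  have hright : sInf (f '' deltaBlock T u v) ≤ sInf (f '' deltaBlock T s v) :=
    csInf_le_csInf hf ⟨f s, mem_image_of_mem f (left_mem_deltaBlock hs hsv)⟩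
      (image_mono (deltaBlock_subset_of_le_left hus.le))
  calc _ = sInf (f '' deltaBlock T u v) * (g s - g u) +
          sInf (f '' deltaBlock T u v) * (g v - g s) := by ring
    _ ≤ _ := add_le_add (mul_le_mul_of_nonneg_right hleft (sub_nonneg.2 hgus))
          (mul_le_mul_of_nonneg_right hright (sub_nonneg.2 hgsv))

end DeltaBlock

section InsertAfter

variable {α β : Type*}

/-- The sequence `t₀, …, tₖ, s, tₖ₊₁, tₖ₊₂, …`. -/
def insertAfter (t : ℕ → α) (k : ℕ) (s : α) (j : ℕ) : α :=
  if j ≤ k then t j else if j = k + 1 then s else t (j - 1)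

variable {t : ℕ → α} {k j : ℕ} {s : α}

theorem insertAfter_of_le (h : j ≤ k) : insertAfter t k s j = t j := if_pos h

theorem insertAfter_succ : insertAfter t k s (k + 1) = s := by
  simp [insertAfter]

theorem insertAfter_of_lt (h : k + 1 < j) : insertAfter t k s j = t (j - 1) := by
  simp [insertAfter, show ¬j ≤ k by omega, show j ≠ k + 1 by omega]

theorem sum_range_insertAfter [AddCommGroup β] (φ : α → α → β) {n : ℕ} (hk : k < n) :
    ∑ j ∈ Finset.range (n + 1), φ (insertAfter t k s j) (insertAfter t k s (j + 1)) =
      ∑ j ∈ Finset.range n, φ (t j) (t (j + 1)) - φ (t k) (t (k + 1)) + φ (t k) s +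
        φ s (t (k + 1)) := by
  induction n, Nat.succ_le_of_lt hk using Nat.le_induction with
  | base =>
    have hhead : ∀ j ∈ Finset.range k,
        φ (insertAfter t k s j) (insertAfter t k s (j + 1)) = φ (t j) (t (j + 1)) := by
      intro j hj
      rw [Finset.mem_range] at hj
      rw [insertAfter_of_le hj.le, insertAfter_of_le hj]
    simp only [Finset.sum_range_succ, Finset.sum_congr rfl hhead, insertAfter_of_le le_rfl,
      insertAfter_succ, insertAfter_of_lt (show k + 1 < k + 1 + 1 by omega)]
    abel
  | succ n hn ih =>
    rw [Finset.sum_range_succ, ih (by omega), Finset.sum_range_succ (n := n),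
      insertAfter_of_lt (show k + 1 < n + 1 by omega),
      insertAfter_of_lt (show k + 1 < n + 1 + 1 by omega)]
    simp only [Nat.add_sub_cancel]
    abel

end InsertAfter

namespace TSPartition

variable {T : Set ℝ} {a b : ℝ} {f g : ℝ → ℝ} {j : ℕ} (P Q : TSPartition T a b)

theorem strictMonoOn : StrictMonoOn P.t (Iic P.n) :=
  strictMonoOn_Iic_of_lt_succ fun m hm => P.mono m hm

theorem t_mem (hj : j ≤ P.n) : P.t j ∈ Icc a b ∩ T := by
  have hmono := P.strictMonoOn.monotoneOn
  refine ⟨⟨?_, ?_⟩, P.mem j hj⟩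
  · simpa only [P.first] using hmono (Nat.zero_le P.n) hj (Nat.zero_le j)
  · simpa only [P.last] using hmono hj (le_refl P.n) hj

theorem deltaBlock_subset (hj : j < P.n) :
    deltaBlock T (P.t j) (P.t (j + 1)) ⊆ Icc a b ∩ T := by
  rintro x ⟨⟨hjx, hxρ⟩, hx⟩
  refine ⟨⟨(P.t_mem hj.le).1.1.trans hjx, ?_⟩, hx⟩
  exact hxρ.trans ((tsRho_le (P.mem j hj.le) (P.mono j hj)).trans (P.t_mem hj).1.2)

theorem upperSumD_eq_sum : upperSumD T f g P =
    ∑ j ∈ Finset.range P.n, sSup (f '' deltaBlock T (P.t j) (P.t (j + 1))) *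
      (g (P.t (j + 1)) - g (P.t j)) := rfl

theorem lowerSumD_eq_sum : lowerSumD T f g P =
    ∑ j ∈ Finset.range P.n, sInf (f '' deltaBlock T (P.t j) (P.t (j + 1))) *
      (g (P.t (j + 1)) - g (P.t j)) := rfl

theorem g_le_succ (hg : MonotoneOn g (Icc a b ∩ T)) (hj : j < P.n) :
    g (P.t j) ≤ g (P.t (j + 1)) :=
  hg (P.t_mem hj.le) (P.t_mem hj) (P.mono j hj).le

theorem lowerSumD_le_upperSumD (hfa : BddAbove (f '' (Icc a b ∩ T)))
    (hfb : BddBelow (f '' (Icc a b ∩ T))) (hg : MonotoneOn g (Icc a b ∩ T)) :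
    lowerSumD T f g P ≤ upperSumD T f g P := by
  refine Finset.sum_le_sum fun j hj => mul_le_mul_of_nonneg_right ?_ (sub_nonneg.2 ?_)
  · rw [Finset.mem_range] at hj
    have hsub := image_mono (f := f) (P.deltaBlock_subset hj)
    exact csInf_le_csSup
      ⟨_, mem_image_of_mem f (left_mem_deltaBlock (P.mem j hj.le) (P.mono j hj))⟩
      (hfb.mono hsub) (hfa.mono hsub)
  · exact P.g_le_succ hg (Finset.mem_range.1 hj)

def insertAfter (k : ℕ) (s : ℝ) (hs : s ∈ T) (hk : k < P.n) (hks : P.t k < s)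
    (hsk : s < P.t (k + 1)) : TSPartition T a b where
  n := P.n + 1
  t := _root_.insertAfter P.t k s
  npos := Nat.succ_pos _
  mem j hj := by
    unfold _root_.insertAfter
    split_ifs
    exacts [P.mem j (by omega), hs, P.mem (j - 1) (by omega)]
  first := by rw [insertAfter_of_le (Nat.zero_le k), P.first]
  last := by rw [insertAfter_of_lt (by omega), Nat.add_sub_cancel, P.last]
  mono j hj := by
    unfold _root_.insertAfter
    split_ifs <;> try omega
    · exact P.mono j (by omega)
    · obtain rfl : j = k := by omega
      exact hks
    · obtain rfl : j = k + 1 := by omega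
      simpa using hsk
    · have := P.mono (j - 1) (by omega)
      rwa [show j - 1 + 1 = j by omega] at this

section Insert

variable {k : ℕ} {s : ℝ} (hs : s ∈ T) (hk : k < P.n) (hks : P.t k < s) (hsk : s < P.t (k + 1))
include hs hk hks hsk

theorem n_insertAfter : (P.insertAfter k s hs hk hks hsk).n = P.n + 1 := rfl

theorem t_insertAfter : (P.insertAfter k s hs hk hks hsk).t = _root_.insertAfter P.t k s := rfl

theorem mem_Icc_inter_of_insertAfter : s ∈ Icc a b ∩ T :=
  ⟨⟨(P.t_mem hk.le).1.1.trans hks.le, hsk.le.trans (P.t_mem hk).1.2⟩, hs⟩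

theorem upperSumD_insertAfter_le (hf : BddAbove (f '' (Icc a b ∩ T)))
    (hg : MonotoneOn g (Icc a b ∩ T)) :
    upperSumD T f g (P.insertAfter k s hs hk hks hsk) ≤ upperSumD T f g P := by
  have hs' := P.mem_Icc_inter_of_insertAfter hs hk hks hsk
  have hsplit := sSup_deltaBlock_split_le (f := f) (P.mem k hk.le) hs hks hsk
    (hf.mono (image_mono (P.deltaBlock_subset hk)))
    (hg (P.t_mem hk.le) hs' hks.le) (hg hs' (P.t_mem hk) hsk.le)
  have hsum := sum_range_insertAfter (t := P.t) (s := s)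
    (fun u v => sSup (f '' deltaBlock T u v) * (g v - g u)) hk
  rw [upperSumD_eq_sum, upperSumD_eq_sum, n_insertAfter, t_insertAfter, hsum]
  linarith

theorem lowerSumD_le_insertAfter (hf : BddBelow (f '' (Icc a b ∩ T)))
    (hg : MonotoneOn g (Icc a b ∩ T)) :
    lowerSumD T f g P ≤ lowerSumD T f g (P.insertAfter k s hs hk hks hsk) := by
  have hs' := P.mem_Icc_inter_of_insertAfter hs hk hks hsk
  have hsplit := sInf_deltaBlock_le_split (f := f) (P.mem k hk.le) hs hks hsk
    (hf.mono (image_mono (P.deltaBlock_subset hk)))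
    (hg (P.t_mem hk.le) hs' hks.le) (hg hs' (P.t_mem hk) hsk.le)
  have hsum := sum_range_insertAfter (t := P.t) (s := s)
    (fun u v => sInf (f '' deltaBlock T u v) * (g v - g u)) hk
  rw [lowerSumD_eq_sum, lowerSumD_eq_sum, n_insertAfter, t_insertAfter, hsum]
  linarith

end Insert

def points : Finset ℝ := (Finset.range (P.n + 1)).image P.t

theorem mem_points {x : ℝ} : x ∈ P.points ↔ ∃ j ≤ P.n, P.t j = x := by
  simp [points]

theorem points_subset : (P.points : Set ℝ) ⊆ Icc a b ∩ T := by
  intro x hx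
  obtain ⟨j, hj, rfl⟩ := P.mem_points.1 hx
  exact P.t_mem hj

theorem points_insertAfter {k : ℕ} {s : ℝ} (hs : s ∈ T) (hk : k < P.n) (hks : P.t k < s)
    (hsk : s < P.t (k + 1)) : (P.insertAfter k s hs hk hks hsk).points = insert s P.points := by
  ext x
  simp only [mem_points, Finset.mem_insert, n_insertAfter, t_insertAfter]
  constructor
  · rintro ⟨j, hj, rfl⟩
    rcases lt_trichotomy j (k + 1) with h | rfl | h
    · exact Or.inr ⟨j, by omega, (insertAfter_of_le (by omega)).symm⟩
    · exact Or.inl insertAfter_succ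
    · exact Or.inr ⟨j - 1, by omega, (insertAfter_of_lt h).symm⟩
  · rintro (rfl | ⟨j, hj, rfl⟩)
    · exact ⟨k + 1, by omega, insertAfter_succ⟩
    · rcases le_or_gt j k with h | h
      · exact ⟨j, by omega, insertAfter_of_le h⟩
      · exact ⟨j + 1, by omega, by rw [insertAfter_of_lt (by omega), Nat.add_sub_cancel]⟩

theorem exists_lt_lt_of_notMem_points {s : ℝ} (hs : s ∈ Icc a b) (hns : s ∉ P.points) :
    ∃ k < P.n, P.t k < s ∧ s < P.t (k + 1) := by
  have hne : ∀ j ≤ P.n, P.t j ≠ s := fun j hj h => hns (P.mem_points.2 ⟨j, hj, h⟩)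
  by_contra! hgap
  have hlt : ∀ j ≤ P.n, P.t j < s := by
    intro j hj
    induction j with
    | zero => exact (P.first ▸ hs.1).lt_of_ne (hne 0 hj)
    | succ j ih => exact (hgap j (by omega) (ih (by omega))).lt_of_ne (hne _ hj)
  exact (P.last ▸ hlt P.n le_rfl).not_ge hs.2

theorem exists_refinement (hfa : BddAbove (f '' (Icc a b ∩ T)))
    (hfb : BddBelow (f '' (Icc a b ∩ T))) (hg : MonotoneOn g (Icc a b ∩ T))
    (S : Finset ℝ) (hS : (S : Set ℝ) ⊆ Icc a b ∩ T) :
    ∃ R : TSPartition T a b, R.points = P.points ∪ S ∧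
      lowerSumD T f g P ≤ lowerSumD T f g R ∧ upperSumD T f g R ≤ upperSumD T f g P := by
  classical
  induction S using Finset.induction_on with
  | empty => exact ⟨P, (Finset.union_empty _).symm, le_rfl, le_rfl⟩
  | insert s S _ ih =>
    rw [Finset.coe_insert, insert_subset_iff] at hS
    obtain ⟨R, hR, hRL, hRU⟩ := ih hS.2
    by_cases hsR : s ∈ R.points
    · refine ⟨R, ?_, hRL, hRU⟩
      rw [Finset.union_insert, ← hR, Finset.insert_eq_of_mem hsR]
    · obtain ⟨k, hk, hks, hsk⟩ := R.exists_lt_lt_of_notMem_points hS.1.1 hsR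
      refine ⟨R.insertAfter k s hS.1.2 hk hks hsk, ?_, ?_, ?_⟩
      · rw [points_insertAfter, hR, Finset.union_insert]
      · exact hRL.trans (R.lowerSumD_le_insertAfter hS.1.2 hk hks hsk hfb hg)
      · exact (R.upperSumD_insertAfter_le hS.1.2 hk hks hsk hfa hg).trans hRU

theorem card_points : P.points.card = P.n + 1 := by
  rw [points, Finset.card_image_of_injOn, Finset.card_range]
  refine P.strictMonoOn.injOn.mono fun j hj => ?_
  rw [Finset.coe_range, mem_Iio] at hj
  exact Nat.lt_succ_iff.1 hj

theorem t_eq_of_points_eq (h : P.points = Q.points) (hn : P.n = Q.n) {j : ℕ} (hj : j ≤ P.n) :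
    P.t j = Q.t j := by
  have hcard := P.card_points
  have hunique (R : TSPartition T a b) (hR : R.points = P.points) (hRn : R.n = P.n) :
      (fun i : Fin (P.n + 1) => R.t i) = P.points.orderEmbOfFin hcard :=
    Finset.orderEmbOfFin_unique hcard (fun i => hR ▸ R.mem_points.2 ⟨i, by omega, rfl⟩)
      fun i i' hii' => R.strictMonoOn (by simp; omega) (by simp; omega) hii'
  exact congrFun ((hunique P rfl rfl).trans (hunique Q h.symm hn.symm).symm) ⟨j, by omega⟩

theorem sum_range_eq_of_points_eq (h : P.points = Q.points) (φ : ℝ → ℝ → ℝ) :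
    ∑ j ∈ Finset.range P.n, φ (P.t j) (P.t (j + 1)) =
      ∑ j ∈ Finset.range Q.n, φ (Q.t j) (Q.t (j + 1)) := by
  have hn : P.n = Q.n := by
    simpa [h, card_points] using P.card_points.symm
  rw [← hn]
  refine Finset.sum_congr rfl fun j hj => ?_
  rw [Finset.mem_range] at hj
  rw [P.t_eq_of_points_eq Q h hn hj.le, P.t_eq_of_points_eq Q h hn hj]

theorem exists_common_refinement (hfa : BddAbove (f '' (Icc a b ∩ T)))
    (hfb : BddBelow (f '' (Icc a b ∩ T))) (hg : MonotoneOn g (Icc a b ∩ T)) :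
    ∃ R : TSPartition T a b, lowerSumD T f g P ≤ lowerSumD T f g R ∧
      upperSumD T f g R ≤ upperSumD T f g Q := by
  obtain ⟨R, hR, hPR, -⟩ := P.exists_refinement hfa hfb hg Q.points Q.points_subset
  obtain ⟨R', hR', -, hR'Q⟩ := Q.exists_refinement hfa hfb hg P.points P.points_subset
  have hRR' : upperSumD T f g R = upperSumD T f g R' :=
    R.sum_range_eq_of_points_eq R' (by rw [hR, hR', Finset.union_comm])
      fun u v => sSup (f '' deltaBlock T u v) * (g v - g u)
  exact ⟨R, hPR, hRR' ▸ hR'Q⟩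

def single (ha : a ∈ T) (hb : b ∈ T) (hab : a < b) : TSPartition T a b where
  n := 1
  t j := if j = 0 then a else b
  npos := one_pos
  mem j _ := by split_ifs <;> assumption
  first := if_pos rfl
  last := if_neg one_ne_zero
  mono j hj := by
    obtain rfl : j = 0 := by omega
    simpa using hab

end TSPartition

theorem statement5_general (T : Set ℝ) (a b : ℝ) (ha : a ∈ T) (hb : b ∈ T)
    (hab : a < b) (f g : ℝ → ℝ) (C : ℝ)
    (hf : ∀ t ∈ Set.Icc a b ∩ T, |f t| ≤ C)
    (hg : MonotoneOn g (Set.Icc a b ∩ T)) :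
    RSDeltaIntegrable T a b f g ↔
      ∀ ε > (0 : ℝ), ∃ P : TSPartition T a b,
        upperSumD T f g P - lowerSumD T f g P < ε := by
  have : Nonempty (TSPartition T a b) := ⟨.single ha hb hab⟩
  have hfa : BddAbove (f '' (Icc a b ∩ T)) :=
    ⟨C, forall_mem_image.2 fun t ht => (le_abs_self _).trans (hf t ht)⟩
  have hfb : BddBelow (f '' (Icc a b ∩ T)) :=
    ⟨-C, forall_mem_image.2 fun t ht => neg_le_of_abs_le (hf t ht)⟩
  exact csSup_range_eq_csInf_range_iff (fun P => P.lowerSumD_le_upperSumD hfa hfb hg)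
    fun P Q => P.exists_common_refinement Q hfa hfb hg

/-- Integrability criterion. -/
theorem statement5 (T : Set ℝ) (hT : IsClosed T) (a b : ℝ) (ha : a ∈ T) (hb : b ∈ T)
    (hab : a < b) (f g : ℝ → ℝ) (C : ℝ)
    (hf : ∀ t ∈ Set.Icc a b ∩ T, |f t| ≤ C)
    (hg : MonotoneOn g (Set.Icc a b ∩ T)) :
    RSDeltaIntegrable T a b f g ↔
      ∀ ε > (0 : ℝ), ∃ P : TSPartition T a b,
        upperSumD T f g P - lowerSumD T f g P < ε :=
  statement5_general T a b ha hb hab f g C hf hg
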